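/- Let B be a unital C*-algebra, ψ₁, …, ψ_d a Cuntz family of order d in B with canonical endomorphism σ, and r, s ≥ 0. For n ≥ 0, let c_n denote the permutation of {1, …, n+1} defined by c_n(1) := n + 1 and c_n(i) := i − 1 for 2 ≤ i ≤ n + 1. Suppose t ∈ B satisfies σ(t) = θ(c_s) t θ(c_r)*. Then for all multi-indices L ∈ {1, …, d}^s and M ∈ {1, …, d}^r, the element t_{LM} := ψ_L* t ψ_M is a fixed point of σ: σ(t_{LM}) = t_{LM}. -/

import Mathlib

/-- A Cuntz family of order `d` in a unital C*-algebra `B`:  a family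
`ψ₁, …, ψ_d` with `ψᵢ* ψⱼ = δᵢⱼ 1` and `Σᵢ ψᵢ ψᵢ* = 1`. -/
def IsCuntzFamily {B : Type*} [CStarAlgebra B] {d : ℕ} (ψ : Fin d → B) : Prop :=
  (∀ i j, star (ψ i) * ψ j = if i = j then (1 : B) else 0) ∧
    ∑ i, ψ i * star (ψ i) = 1

/-- The canonical endomorphism `σ(b) := Σᵢ ψᵢ b ψᵢ*` of a Cuntz family. -/
def cuntzEndo {B : Type*} [CStarAlgebra B] {d : ℕ} (ψ : Fin d → B) (b : B) : B :=
  ∑ i, ψ i * b * star (ψ i)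

/-- The word `ψ_J := ψ_{j₁} ⋯ ψ_{j_r}` associated with a multi-index
`J = (j₁, …, j_r) ∈ {1, …, d}^r`. -/
def cuntzWord {B : Type*} [CStarAlgebra B] {d : ℕ} (ψ : Fin d → B) {r : ℕ}
    (J : Fin r → Fin d) : B :=
  (List.ofFn fun k => ψ (J k)).prod

/-- The permutation operator
`θ(p) := Σ_{l₁,…,l_r} ψ_{l_{p(1)}} ⋯ ψ_{l_{p(r)}} ψ_{l_r}* ⋯ ψ_{l₁}*`. -/
def cuntzPermOp {B : Type*} [CStarAlgebra B] {d : ℕ} (ψ : Fin d → B) {r : ℕ}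
    (p : Equiv.Perm (Fin r)) : B :=
  ∑ l : Fin r → Fin d, cuntzWord ψ (l ∘ p) * star (cuntzWord ψ l)

/-!
`σ` is a `*`-endomorphism. Since `θ(p) ψ_J = ψ_{J ∘ p}` and `(J i) ∘ c_n = i J`, it acts on
words by `σ(ψ_J) = Σᵢ ψ_{iJ} ψᵢ* = Σᵢ θ(c_n) ψ_J ψᵢ ψᵢ* = θ(c_n) ψ_J`. Hence
`σ(ψ_L* t ψ_M) = ψ_L* θ(c_s)* θ(c_s) t θ(c_r)* θ(c_r) ψ_M`, and `θ(p)` is an isometry because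
`θ(p)* = θ(p⁻¹)`.
-/

section

variable {B : Type*} [CStarAlgebra B] {d : ℕ} (ψ : Fin d → B)

@[simp]
lemma cuntzWord_zero (J : Fin 0 → Fin d) : cuntzWord ψ J = 1 := by
  simp [cuntzWord]

lemma cuntzWord_cons {n : ℕ} (a : Fin d) (J : Fin n → Fin d) :
    cuntzWord ψ (Fin.cons a J) = ψ a * cuntzWord ψ J := by
  simp [cuntzWord, List.ofFn_succ]

lemma cuntzWord_snoc {n : ℕ} (J : Fin n → Fin d) (a : Fin d) :
    cuntzWord ψ (Fin.snoc J a) = cuntzWord ψ J * ψ a := by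
  rw [cuntzWord, List.ofFn_succ']
  simp [cuntzWord]

lemma star_cuntzPermOp {n : ℕ} (p : Equiv.Perm (Fin n)) :
    star (cuntzPermOp ψ p) = cuntzPermOp ψ p⁻¹ := by
  rw [cuntzPermOp, cuntzPermOp, star_sum]
  refine Fintype.sum_equiv (p.symm.arrowCongr (Equiv.refl _)) _ _ fun l => ?_
  change _ = cuntzWord ψ ((l ∘ p) ∘ p.symm) * star (cuntzWord ψ (l ∘ p))
  rw [Function.comp_assoc, Equiv.self_comp_symm, Function.comp_id, star_mul, star_star]

lemma cuntzEndo_star (b : B) : cuntzEndo ψ (star b) = star (cuntzEndo ψ b) := by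
  simp [cuntzEndo, star_sum, mul_assoc]

end

namespace IsCuntzFamily

variable {B : Type*} [CStarAlgebra B] {d : ℕ} {ψ : Fin d → B} (hψ : IsCuntzFamily ψ)
include hψ

lemma star_cuntzWord_mul_cuntzWord {n : ℕ} (K J : Fin n → Fin d) :
    star (cuntzWord ψ K) * cuntzWord ψ J = if K = J then 1 else 0 := by
  induction n with
  | zero => simp [Subsingleton.elim K J]
  | succ n ih =>
    induction K using Fin.consCases with | cons a K =>
    induction J using Fin.consCases with | cons b J =>
    have hsplit : star (cuntzWord ψ (Fin.cons a K)) * cuntzWord ψ (Fin.cons b J) =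
        star (cuntzWord ψ K) * (star (ψ a) * ψ b) * cuntzWord ψ J := by
      simp only [cuntzWord_cons, star_mul, mul_assoc]
    rw [hsplit, hψ.1]
    by_cases hab : a = b <;> simp [hab, ih, Fin.cons_inj]

lemma sum_cuntzWord_mul_star (n : ℕ) :
    ∑ J : Fin n → Fin d, cuntzWord ψ J * star (cuntzWord ψ J) = 1 := by
  induction n with
  | zero => simp
  | succ n ih =>
    rw [← (Fin.consEquiv fun _ => Fin d).sum_comp, Fintype.sum_prod_type, ← hψ.2]
    refine Finset.sum_congr rfl fun a _ => ?_
    simp only [Fin.consEquiv, Equiv.coe_fn_mk, cuntzWord_cons, star_mul]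
    calc ∑ J : Fin n → Fin d, ψ a * cuntzWord ψ J * (star (cuntzWord ψ J) * star (ψ a))
        = ψ a * (∑ J : Fin n → Fin d, cuntzWord ψ J * star (cuntzWord ψ J)) * star (ψ a) := by
          simp only [Finset.mul_sum, Finset.sum_mul, mul_assoc]
      _ = ψ a * star (ψ a) := by rw [ih, mul_one]

lemma cuntzPermOp_mul_cuntzWord {n : ℕ} (p : Equiv.Perm (Fin n)) (J : Fin n → Fin d) :
    cuntzPermOp ψ p * cuntzWord ψ J = cuntzWord ψ (J ∘ p) := by
  simp [cuntzPermOp, Finset.sum_mul, mul_assoc, hψ.star_cuntzWord_mul_cuntzWord]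

lemma star_cuntzPermOp_mul_self {n : ℕ} (p : Equiv.Perm (Fin n)) :
    star (cuntzPermOp ψ p) * cuntzPermOp ψ p = 1 := by
  rw [star_cuntzPermOp, ← hψ.sum_cuntzWord_mul_star n]
  nth_rewrite 2 [cuntzPermOp]
  simp only [Finset.mul_sum, ← mul_assoc, hψ.cuntzPermOp_mul_cuntzWord, Function.comp_assoc,
    ← Equiv.Perm.coe_mul, mul_inv_cancel, Equiv.Perm.coe_one, Function.comp_id]

lemma cuntzEndo_mul (a b : B) : cuntzEndo ψ (a * b) = cuntzEndo ψ a * cuntzEndo ψ b := by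
  simp only [cuntzEndo, Finset.sum_mul_sum]
  refine Finset.sum_congr rfl fun i _ => ?_
  have hsplit : ∀ j, ψ i * a * star (ψ i) * (ψ j * b * star (ψ j)) =
      ψ i * a * (star (ψ i) * ψ j) * b * star (ψ j) := fun j => by simp only [mul_assoc]
  simp only [hsplit, hψ.1, mul_ite, ite_mul, mul_one, mul_zero, zero_mul]
  simp [mul_assoc]

lemma cuntzEndo_cuntzWord {n : ℕ} (c : Equiv.Perm (Fin (n + 1)))
    (hc0 : c 0 = Fin.last n) (hc : ∀ i : Fin n, c i.succ = i.castSucc) (J : Fin n → Fin d) :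
    cuntzEndo ψ (cuntzWord ψ J) = cuntzPermOp ψ c * cuntzWord ψ J := by
  have hcycle : ∀ a, (Fin.snoc J a : Fin (n + 1) → Fin d) ∘ c = Fin.cons a J := fun a => by
    ext k
    induction k using Fin.cases <;> simp [hc0, hc]
  calc cuntzEndo ψ (cuntzWord ψ J)
      = ∑ a, cuntzPermOp ψ c * cuntzWord ψ (Fin.snoc J a) * star (ψ a) := by
        simp only [cuntzEndo, hψ.cuntzPermOp_mul_cuntzWord, hcycle, cuntzWord_cons]
    _ = cuntzPermOp ψ c * cuntzWord ψ J := by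
        simp only [cuntzWord_snoc, mul_assoc, ← Finset.mul_sum, hψ.2, mul_one]

end IsCuntzFamily

/-- **Matrix coefficients of symmetry intertwiners are fixed points.**
Let `ψ₁, …, ψ_d` be a Cuntz family of order `d` in a unital C*-algebra `B` with
canonical endomorphism `σ`, and `r, s ≥ 0`.  For `n ≥ 0`, let `c_n` be the
cyclic permutation of `{1, …, n+1}` sending the first letter to the last
position (in zero-based indexing: `c_n 0 = n` and `c_n (i+1) = i`).  Suppose
`t ∈ B` satisfies `σ(t) = θ(c_s) t θ(c_r)*`.  Then for all multi-indices
`L ∈ {1, …, d}^s` and `M ∈ {1, …, d}^r`, the element `t_{LM} := ψ_L* t ψ_M` is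
a fixed point of `σ`. -/
theorem symmetry_intertwiner_coefficients_fixed {B : Type*} [CStarAlgebra B]
    {d : ℕ} (ψ : Fin d → B) (hψ : IsCuntzFamily ψ)
    {r s : ℕ}
    (cr : Equiv.Perm (Fin (r + 1)))
    (hcr0 : cr 0 = Fin.last r) (hcr : ∀ i : Fin r, cr i.succ = i.castSucc)
    (cs : Equiv.Perm (Fin (s + 1)))
    (hcs0 : cs 0 = Fin.last s) (hcs : ∀ i : Fin s, cs i.succ = i.castSucc)
    (t : B)
    (ht : cuntzEndo ψ t = cuntzPermOp ψ cs * t * star (cuntzPermOp ψ cr))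
    (L : Fin s → Fin d) (M : Fin r → Fin d) :
    cuntzEndo ψ (star (cuntzWord ψ L) * t * cuntzWord ψ M) =
      star (cuntzWord ψ L) * t * cuntzWord ψ M := by
  calc cuntzEndo ψ (star (cuntzWord ψ L) * t * cuntzWord ψ M)
      = star (cuntzWord ψ L) * (star (cuntzPermOp ψ cs) * cuntzPermOp ψ cs) * t *
          (star (cuntzPermOp ψ cr) * cuntzPermOp ψ cr) * cuntzWord ψ M := by
        rw [hψ.cuntzEndo_mul, hψ.cuntzEndo_mul, cuntzEndo_star, hψ.cuntzEndo_cuntzWord cs hcs0 hcs,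
          hψ.cuntzEndo_cuntzWord cr hcr0 hcr, ht, star_mul]
        simp only [mul_assoc]
    _ = star (cuntzWord ψ L) * t * cuntzWord ψ M := by
        rw [hψ.star_cuntzPermOp_mul_self, hψ.star_cuntzPermOp_mul_self, mul_one, mul_one]
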